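/- arXiv:2412.10395 — 3 statements merged into one kernel-verified Lean document; each statement's English description precedes it below -/
import Mathlib

section
/- Let a ∈ ℂ with Re(a) > 0 and Im(a) ≠ 0, and let m ∈ ℝ with 0 < m < 1. Then ∫₀¹ x^{m−1} / (a⁴ − (log x)⁴) dx = −( e^{−a m} Γ(0, −a m) + i e^{−i a m} ( Γ(0, −i a m) − e^{2 i a m} Γ(0, i a m) ) − e^{a m} Γ(0, a m) ) / (4 a³). -/
open MeasureTheory

/-- Upper incomplete gamma function: `Γ(s, z) = e^{-z} ∫₀^∞ e^{-t} (t + z)^(s-1) dt`,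
with principal-branch complex powers. -/
noncomputable def uGamma (s z : ℂ) : ℂ :=
  Complex.exp (-z) * ∫ t in Set.Ioi (0:ℝ), Complex.exp (-(t:ℂ)) * ((t:ℂ) + z) ^ (s - 1)

open Set

/-!
Substituting `x = e^{-u}` turns the integral into the Laplace transform
`∫₀^∞ e^{-m u} / (a⁴ - u⁴) du`. Since `a⁴ - u⁴ = -(u + a)(u - a)(u + i a)(u - i a)`, partial
fractions reduce it to the four transforms `∫₀^∞ e^{-m u} / (u + c) du`, `c ∈ {±a, ±i a}`, and the
rescaling `t = m u` identifies each of them with `e^{c m} Γ(0, c m)`.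
-/

theorem integral_comp_exp_Iic {E : Type*} [NormedAddCommGroup E] [NormedSpace ℝ E]
    (g : ℝ → E) (a : ℝ) :
    ∫ x in Iic a, Real.exp x • g (Real.exp x) = ∫ y in Ioc 0 (Real.exp a), g y := by
  symm
  rw [← Real.image_exp_Iic]
  simpa [abs_of_pos (Real.exp_pos _)] using integral_image_eq_integral_abs_deriv_smul
    measurableSet_Iic (fun x _ ↦ (Real.hasDerivAt_exp x).hasDerivWithinAt)
    (fun x _ y _ hxy ↦ Real.exp_injective hxy) g

namespace Complex

lemma ofReal_add_ne_zero_of_mem_slitPlane {c : ℂ} (hc : c ∈ slitPlane) {t : ℝ} (ht : 0 ≤ t) :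
    (t : ℂ) + c ≠ 0 := by
  intro h
  rw [eq_neg_of_add_eq_zero_right h] at hc
  exact ht.not_gt (neg_ofReal_mem_slitPlane.1 hc)

lemma exists_pos_le_norm_ofReal_add {c : ℂ} (hc : c ∈ slitPlane) :
    ∃ δ > 0, ∀ t : ℝ, 0 ≤ t → δ ≤ ‖(t : ℂ) + c‖ := by
  rcases mem_slitPlane_iff.1 hc with hre | him
  · refine ⟨c.re, hre, fun t ht ↦ ?_⟩
    calc c.re ≤ ((t : ℂ) + c).re := by simp [ht]
      _ ≤ ‖(t : ℂ) + c‖ := re_le_norm _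
  · refine ⟨|c.im|, abs_pos.2 him, fun t _ ↦ ?_⟩
    simpa using abs_im_le_norm ((t : ℂ) + c)

lemma integrableOn_exp_neg_mul_div_ofReal_add {c : ℂ} (hc : c ∈ slitPlane) {m : ℝ} (hm : 0 < m) :
    IntegrableOn (fun u : ℝ ↦ exp (-(m * u)) / (u + c)) (Ioi 0) := by
  obtain ⟨δ, hδ, hle⟩ := exists_pos_le_norm_ofReal_add hc
  have hcont : ContinuousOn (fun u : ℝ ↦ exp (-(m * u)) / (u + c)) (Ioi 0) :=
    ContinuousOn.div (by fun_prop) (by fun_prop)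
      fun u hu ↦ ofReal_add_ne_zero_of_mem_slitPlane hc (le_of_lt hu)
  refine ((exp_neg_integrableOn_Ioi 0 hm).const_mul δ⁻¹).mono'
    (hcont.aestronglyMeasurable measurableSet_Ioi) ?_
  filter_upwards [ae_restrict_mem measurableSet_Ioi] with u hu
  rw [norm_div, norm_exp, div_eq_inv_mul]
  rw [show (-((m : ℂ) * u)).re = -m * u by simp]
  gcongr
  exact hle u (le_of_lt hu)

end Complex

open Complex

lemma uGamma_zero (z : ℂ) :
    uGamma 0 z = exp (-z) * ∫ t in Ioi (0 : ℝ), exp (-t) / (t + z) := by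
  simp only [uGamma, zero_sub, cpow_neg_one, div_eq_mul_inv]

theorem integral_exp_neg_mul_div_ofReal_add {c : ℂ} (hc : c ∈ slitPlane) {m : ℝ} (hm : 0 < m) :
    ∫ u in Ioi (0 : ℝ), exp (-(m * u)) / (u + c) = exp (c * m) * uGamma 0 (c * m) := by
  set g : ℝ → ℂ := fun t ↦ exp (-t) / (t + c * m)
  have hm' : (m : ℂ) ≠ 0 := ofReal_ne_zero.2 hm.ne'
  have hscale : ∫ u in Ioi (0 : ℝ), exp (-(m * u)) / (u + c) = ∫ t in Ioi (0 : ℝ), g t :=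
    calc ∫ u in Ioi (0 : ℝ), exp (-(m * u)) / (u + c)
        = (m : ℂ) * ∫ u in Ioi (0 : ℝ), g (m * u) := by
          rw [← integral_const_mul]
          refine setIntegral_congr_fun measurableSet_Ioi fun u hu ↦ ?_
          have := ofReal_add_ne_zero_of_mem_slitPlane hc (le_of_lt hu)
          simp only [g]
          push_cast
          field_simp
      _ = ∫ t in Ioi (0 : ℝ), g t := by
          rw [integral_comp_mul_left_Ioi g 0 hm, mul_zero, real_smul, ofReal_inv,
            ← mul_assoc, mul_inv_cancel₀ hm', one_mul]
  rw [hscale, uGamma_zero, ← mul_assoc, ← exp_add, add_neg_cancel, exp_zero, one_mul]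

lemma inv_sub_pow_four_eq {a u : ℂ} (ha : a ≠ 0) (h₁ : u + a ≠ 0) (h₂ : u - a ≠ 0)
    (h₃ : u + I * a ≠ 0) (h₄ : u - I * a ≠ 0) :
    (a ^ 4 - u ^ 4)⁻¹
      = (4 * a ^ 3)⁻¹ * ((u + a)⁻¹ - (u - a)⁻¹ + I * (u + I * a)⁻¹ - I * (u - I * a)⁻¹) := by
  have hfac : a ^ 4 - u ^ 4 = -((u + a) * (u - a) * (u + I * a) * (u - I * a)) := by
    linear_combination (-(a ^ 2 * u ^ 2) + a ^ 4) * I_sq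
  rw [hfac]
  -- with `I` replaced by `b / a`, `b² = -a²`, `field_simp` keeps the four linear factors intact
  generalize hb : I * a = b at *
  have hI : I = b / a := by rw [← hb]; field_simp
  have hb2 : b ^ 2 = -a ^ 2 := by rw [← hb, mul_pow, I_sq]; ring
  rw [hI]
  field_simp
  linear_combination (2 * u ^ 2 - 4 * a ^ 2) * hb2

theorem integral_zero_one_cpow_div_sub_log_pow_four (s a : ℂ) :
    ∫ x in (0 : ℝ)..1, (x : ℂ) ^ (s - 1) / (a ^ 4 - log (x : ℂ) ^ 4)
      = ∫ u in Ioi (0 : ℝ), exp (-(s * u)) / (a ^ 4 - (u : ℂ) ^ 4) := by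
  set g : ℝ → ℂ := fun x ↦ (x : ℂ) ^ (s - 1) / (a ^ 4 - log (x : ℂ) ^ 4)
  have hsubst := integral_comp_neg_Ioi 0 fun x ↦ Real.exp x • g (Real.exp x)
  rw [neg_zero, integral_comp_exp_Iic g, Real.exp_zero] at hsubst
  rw [intervalIntegral.integral_of_le zero_le_one, ← hsubst]
  congr 1 with u
  have hlog : log ((Real.exp (-u) : ℝ) : ℂ) = -u := by
    rw [← ofReal_log (Real.exp_pos _).le, Real.log_exp, ofReal_neg]
  simp only [g]
  rw [cpow_def_of_ne_zero (ofReal_ne_zero.2 (Real.exp_pos _).ne'), hlog, real_smul, ofReal_exp,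
    ofReal_neg, mul_div_assoc', ← exp_add]
  ring_nf

theorem integral_exp_neg_mul_div_sub_pow_four {a : ℂ} (h₁ : a ∈ slitPlane) (h₂ : -a ∈ slitPlane)
    (h₃ : I * a ∈ slitPlane) (h₄ : -(I * a) ∈ slitPlane) {m : ℝ} (hm : 0 < m) :
    ∫ u in Ioi (0 : ℝ), exp (-(m * u)) / (a ^ 4 - (u : ℂ) ^ 4)
      = (4 * a ^ 3)⁻¹ * (exp (a * m) * uGamma 0 (a * m) - exp (-a * m) * uGamma 0 (-a * m)
          + I * (exp (I * a * m) * uGamma 0 (I * a * m))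
          - I * (exp (-(I * a) * m) * uGamma 0 (-(I * a) * m))) := by
  set F : ℂ → ℝ → ℂ := fun c u ↦ exp (-(m * u)) / (u + c)
  have hF (c : ℂ) (hc : c ∈ slitPlane) : IntegrableOn (F c) (Ioi 0) :=
    integrableOn_exp_neg_mul_div_ofReal_add hc hm
  have hsplit : EqOn (fun u : ℝ ↦ exp (-(m * u)) / (a ^ 4 - (u : ℂ) ^ 4))
      (fun u ↦ (4 * a ^ 3)⁻¹ * (F a u - F (-a) u + I * F (I * a) u - I * F (-(I * a)) u))
      (Ioi 0) := fun u hu ↦ by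
    have hne (c : ℂ) (hc : c ∈ slitPlane) := ofReal_add_ne_zero_of_mem_slitPlane hc (le_of_lt hu)
    dsimp only
    rw [div_eq_mul_inv, inv_sub_pow_four_eq (slitPlane_ne_zero h₁) (hne a h₁)
      (by simpa [sub_eq_add_neg] using hne _ h₂) (hne _ h₃)
      (by simpa [sub_eq_add_neg] using hne _ h₄)]
    simp only [F, sub_eq_add_neg, div_eq_mul_inv]
    ring
  have hF₁₂ : IntegrableOn (fun u ↦ F a u - F (-a) u) (Ioi 0) := (hF _ h₁).sub (hF _ h₂)
  have hF₁₂₃ : IntegrableOn (fun u ↦ F a u - F (-a) u + I * F (I * a) u) (Ioi 0) :=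
    hF₁₂.add ((hF _ h₃).const_mul I)
  rw [setIntegral_congr_fun measurableSet_Ioi hsplit, integral_const_mul,
    integral_sub hF₁₂₃ ((hF _ h₄).const_mul I), integral_add hF₁₂ ((hF _ h₃).const_mul I),
    integral_sub (hF _ h₁) (hF _ h₂), integral_const_mul, integral_const_mul,
    integral_exp_neg_mul_div_ofReal_add h₁ hm, integral_exp_neg_mul_div_ofReal_add h₂ hm,
    integral_exp_neg_mul_div_ofReal_add h₃ hm, integral_exp_neg_mul_div_ofReal_add h₄ hm]

theorem stmt3_general (a : ℂ) (ha : 0 < a.re) (ha' : a.im ≠ 0) (m : ℝ) (hm0 : 0 < m) :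
    (∫ x in (0:ℝ)..1, (x:ℂ) ^ ((m:ℂ) - 1) / (a ^ 4 - (Complex.log (x:ℂ)) ^ 4))
    = -(Complex.exp (-(a * (m:ℂ))) * uGamma 0 (-(a * (m:ℂ)))
        + Complex.I * Complex.exp (-Complex.I * a * (m:ℂ))
          * (uGamma 0 (-Complex.I * a * (m:ℂ))
              - Complex.exp (2 * Complex.I * a * (m:ℂ)) * uGamma 0 (Complex.I * a * (m:ℂ)))
        - Complex.exp (a * (m:ℂ)) * uGamma 0 (a * (m:ℂ))) / (4 * a ^ 3) := by
  have hIa : (I * a).im ≠ 0 := by simpa using ha.ne'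
  rw [integral_zero_one_cpow_div_sub_log_pow_four,
    integral_exp_neg_mul_div_sub_pow_four (mem_slitPlane_iff.2 (.inl ha))
      (mem_slitPlane_iff.2 (.inr (by rwa [neg_im, neg_ne_zero]))) (mem_slitPlane_iff.2 (.inr hIa))
      (mem_slitPlane_iff.2 (.inr (by rwa [neg_im, neg_ne_zero]))) hm0]
  have hexp : exp (I * a * m) = exp (-I * a * m) * exp (2 * I * a * m) := by
    rw [← exp_add]; congr 1; ring
  rw [hexp, neg_mul a, neg_mul I]
  ring

theorem stmt3 (a : ℂ) (ha : 0 < a.re) (ha' : a.im ≠ 0) (m : ℝ) (hm0 : 0 < m) (hm1 : m < 1) :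
    (∫ x in (0:ℝ)..1, (x:ℂ) ^ ((m:ℂ) - 1) / (a ^ 4 - (Complex.log (x:ℂ)) ^ 4))
    = -(Complex.exp (-(a * (m:ℂ))) * uGamma 0 (-(a * (m:ℂ)))
        + Complex.I * Complex.exp (-Complex.I * a * (m:ℂ))
          * (uGamma 0 (-Complex.I * a * (m:ℂ))
              - Complex.exp (2 * Complex.I * a * (m:ℂ)) * uGamma 0 (Complex.I * a * (m:ℂ)))
        - Complex.exp (a * (m:ℂ)) * uGamma 0 (a * (m:ℂ))) / (4 * a ^ 3) :=
  stmt3_general a ha ha' m hm0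
end

section
/- Let a ∈ ℝ with 0 < a < 1 and let b, c, k, m ∈ ℂ with Re(b) > 0, Re(m) > 0 and ‖c‖ < 1. Then ∫₀¹ x^{m−1} (−log(a x))^k log(1 + c x^b) dx = Σ_{j=0}^∞ a^{−b(1+j)−m} (−c)^j c · (b + b j + m)^{−1−k} · Γ(1+k, −(b + b j + m) log a) / (1 + j). -/
open MeasureTheory

/-
Expanding `log (1 + c x^b)` in its power series and integrating term by term (the terms are
dominated by a geometric series) reduces the claim to `∫₀¹ x^(s-1) (-log (a x))^k dx` with
`s = b (1 + j) + m`. The substitution `x = e^(-v)` turns this into the Laplace-type integral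
`a^(-s) ∫₀^∞ e^(-s v) (v + T)^k dv` with `T = -log a > 0`. For real `s > 0` the scaling `v = t / s`
identifies the latter with `s^(-1-k) e^(s T) Γ(1+k, s T)`; both sides are holomorphic in `s` on the
right half-plane, so the identity theorem extends this to complex `s`.
-/

open Set Filter Asymptotics Metric
open scoped Topology Real

lemma integrableOn_exp_neg_mul_mul_add_rpow {ε d : ℝ} (hε : 0 < ε) (hd : 0 < d) (ρ : ℝ) :
    IntegrableOn (fun t : ℝ ↦ Real.exp (-(ε * t)) * (t + d) ^ ρ) (Ioi 0) := by
  refine integrable_of_isBigO_exp_neg (half_pos hε) ?_ ?_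
  · refine (Continuous.continuousOn (by fun_prop)).mul (ContinuousOn.rpow_const (by fun_prop) ?_)
    exact fun t (ht : 0 ≤ t) ↦ Or.inl (by positivity)
  · have hpow : (fun t : ℝ ↦ (t + d) ^ ρ) =O[atTop] fun t ↦ Real.exp (ε / 2 * t) := by
      refine ((isLittleO_rpow_exp_pos_mul_atTop ρ (half_pos hε)).comp_tendsto
        (tendsto_atTop_add_const_right atTop d tendsto_id)).isBigO.trans ?_
      refine (isBigO_refl (fun t : ℝ ↦ Real.exp (ε / 2 * t)) atTop).const_mul_left
        (Real.exp (ε / 2 * d)) |>.congr_left fun t ↦ ?_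
      simp only [Function.comp, id, ← Real.exp_add]
      ring_nf
    refine ((isBigO_refl (fun t : ℝ ↦ Real.exp (-(ε * t))) atTop).mul hpow).congr_right fun t ↦ ?_
    rw [← Real.exp_add]
    ring_nf

lemma norm_cpow_le_rpow_mul_exp (z w : ℂ) : ‖z ^ w‖ ≤ ‖z‖ ^ w.re * Real.exp (π * |w.im|) := by
  refine (Complex.norm_cpow_le z w).trans ?_
  rw [div_eq_mul_inv, ← Real.exp_neg]
  gcongr
  calc -(z.arg * w.im) ≤ |z.arg| * |w.im| := by rw [← abs_mul]; exact neg_le_abs _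
    _ ≤ π * |w.im| := by gcongr; exact Complex.abs_arg_le_pi z

lemma rpow_le_rpow_add_rpow_of_mem_Icc {l x L : ℝ} (hl : 0 < l) (hx : x ∈ Icc l L) (ρ : ℝ) :
    x ^ ρ ≤ l ^ ρ + L ^ ρ := by
  have hx0 : 0 < x := hl.trans_le hx.1
  rcases le_total 0 ρ with hρ | hρ
  · linarith [Real.rpow_le_rpow hx0.le hx.2 hρ, Real.rpow_nonneg hl.le ρ]
  · linarith [Real.rpow_le_rpow_of_nonpos hl hx.1 hρ, Real.rpow_nonneg (hx0.le.trans hx.2) ρ]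

lemma re_sub_le_re_of_mem_closedBall {z z₀ : ℂ} {r : ℝ} (hz : z ∈ closedBall z₀ r) :
    z₀.re - r ≤ z.re := by
  have := (Complex.abs_re_le_norm (z - z₀)).trans (mem_closedBall_iff_norm.1 hz)
  rw [Complex.sub_re] at this
  linarith [neg_abs_le (z.re - z₀.re)]

theorem differentiableAt_integral_of_dominated {α E : Type*} [MeasurableSpace α] {μ : Measure α}
    [NormedAddCommGroup E] [NormedSpace ℂ E] {F : ℂ → α → E} {z₀ : ℂ} {r : ℝ} (hr : 0 < r)
    {bound : α → ℝ} (hF_meas : ∀ z ∈ closedBall z₀ r, AEStronglyMeasurable (F z) μ)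
    (hF_diff : ∀ᵐ t ∂μ, DifferentiableOn ℂ (F · t) (closedBall z₀ r))
    (hF_bound : ∀ᵐ t ∂μ, ∀ z ∈ closedBall z₀ r, ‖F z t‖ ≤ bound t)
    (bound_integrable : Integrable bound μ) :
    DifferentiableAt ℂ (fun z ↦ ∫ t, F z t ∂μ) z₀ := by
  have hr2 : 0 < r / 2 := half_pos hr
  have hball : ∀ z ∈ ball z₀ (r / 2), closedBall z (r / 2) ⊆ closedBall z₀ r := fun z hz ↦
    closedBall_subset_closedBall' (by linarith [mem_ball.1 hz])
  have hderiv : ∀ᵐ t ∂μ, ∀ z ∈ ball z₀ (r / 2), HasDerivAt (F · t) (deriv (F · t) z) z := by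
    filter_upwards [hF_diff] with t ht z hz
    exact (ht.differentiableAt (closedBall_mem_nhds_of_mem
      (ball_subset_ball (half_le_self hr.le) hz))).hasDerivAt
  -- Cauchy's estimate turns the uniform bound on `F` into one on its derivative.
  have hderiv_bound : ∀ᵐ t ∂μ, ∀ z ∈ ball z₀ (r / 2), ‖deriv (F · t) z‖ ≤ bound t / (r / 2) := by
    filter_upwards [hF_diff, hF_bound] with t hdiff hbound z hz
    refine Complex.norm_deriv_le_of_forall_mem_sphere_norm_le hr2 ?_
      fun w hw ↦ hbound w (hball z hz (sphere_subset_closedBall hw))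
    exact (hdiff.mono ((closure_ball z hr2.ne').trans_subset (hball z hz))).diffContOnCl
  -- The derivative at `z₀` is measurable in `t` as a limit of difference quotients.
  have hslope : ∀ᵐ t ∂μ, Tendsto (fun n : ℕ ↦ ((r / (n + 1) : ℝ) : ℂ)⁻¹ •
      (F (z₀ + (r / (n + 1) : ℝ)) t - F z₀ t)) atTop (𝓝 (deriv (F · t) z₀)) := by
    filter_upwards [hderiv] with t ht
    refine (hasDerivAt_iff_tendsto_slope_zero.1 (ht z₀ (mem_ball_self hr2))).comp ?_
    refine tendsto_nhdsWithin_iff.2 ⟨?_, Eventually.of_forall fun n ↦ ?_⟩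
    · have h := (tendsto_one_div_add_atTop_nhds_zero_nat (𝕜 := ℝ)).const_mul r
      rw [mul_zero] at h
      simpa [Function.comp_def, div_eq_mul_inv] using (Complex.continuous_ofReal.tendsto 0).comp h
    · simp only [mem_compl_iff, mem_singleton_iff, Complex.ofReal_eq_zero]
      positivity
  have hF_meas' : ∀ n : ℕ, AEStronglyMeasurable (F (z₀ + (r / (n + 1) : ℝ))) μ := fun n ↦
    hF_meas _ <| by
      rw [mem_closedBall, dist_self_add_left, Complex.norm_real, Real.norm_eq_abs,
        abs_of_pos (by positivity)]
      exact div_le_self hr.le (by linarith [n.cast_nonneg (α := ℝ)])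
  refine (hasDerivAt_integral_of_dominated_loc_of_deriv_le (ball_mem_nhds z₀ hr2)
    (eventually_of_mem (closedBall_mem_nhds z₀ hr) hF_meas)
    (bound_integrable.mono' (hF_meas z₀ (mem_closedBall_self hr.le))
      (hF_bound.mono fun t ht ↦ ht z₀ (mem_closedBall_self hr.le)))
    (aestronglyMeasurable_of_tendsto_ae atTop (fun n ↦ (hF_meas' n).sub (hF_meas z₀
      (mem_closedBall_self hr.le)) |>.const_smul _) hslope)
    hderiv_bound (bound_integrable.div_const _) hderiv).2.differentiableAt

lemma differentiableOn_uGamma (s : ℂ) : DifferentiableOn ℂ (uGamma s) {z | 0 < z.re} := by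
  intro z₀ hz₀
  refine DifferentiableAt.differentiableWithinAt (DifferentiableAt.mul (by fun_prop) ?_)
  set r := z₀.re / 2
  set M := ‖z₀‖ + r
  have hr : 0 < r := half_pos hz₀
  have hM : 0 < M := by positivity
  have hr_eq : z₀.re - r = r := by ring
  have hre : ∀ z ∈ closedBall z₀ r, ∀ t : ℝ, 0 < t → t + r ≤ ((t:ℂ) + z).re := fun z hz t _ ↦ by
    simp only [Complex.add_re, Complex.ofReal_re]
    linarith [re_sub_le_re_of_mem_closedBall hz]
  have hnorm : ∀ z ∈ closedBall z₀ r, ∀ t : ℝ, 0 < t → ‖(t:ℂ) + z‖ ∈ Icc (t + r) (t + M) :=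
    fun z hz t ht ↦ ⟨(hre z hz t ht).trans (Complex.re_le_norm _), by
      refine (norm_add_le _ _).trans ?_
      rw [Complex.norm_real, Real.norm_of_nonneg ht.le]
      linarith [norm_le_norm_add_norm_sub' z z₀, mem_closedBall_iff_norm.1 hz]⟩
  set ρ := (s - 1).re
  refine differentiableAt_integral_of_dominated hr
    (bound := fun t ↦ Real.exp (π * |(s - 1).im|) *
      (Real.exp (-(1 * t)) * (t + r) ^ ρ + Real.exp (-(1 * t)) * (t + M) ^ ρ))
    (fun z _ ↦ by fun_prop) ?_ ?_
    (((integrableOn_exp_neg_mul_mul_add_rpow one_pos hr ρ).add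
      (integrableOn_exp_neg_mul_mul_add_rpow one_pos hM ρ)).const_mul _)
  · filter_upwards [ae_restrict_mem measurableSet_Ioi] with t (ht : 0 < t)
    intro z hz
    refine (DifferentiableAt.cpow_const (by fun_prop) ?_).const_mul _ |>.differentiableWithinAt
    exact Or.inl (by linarith [hre z hz t ht])
  · filter_upwards [ae_restrict_mem measurableSet_Ioi] with t (ht : 0 < t)
    intro z hz
    have hpow := (norm_cpow_le_rpow_mul_exp ((t:ℂ) + z) (s - 1)).trans
      (mul_le_mul_of_nonneg_right (rpow_le_rpow_add_rpow_of_mem_Icc (by positivity)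
        (hnorm z hz t ht) ρ) (Real.exp_pos _).le)
    rw [norm_mul, Complex.norm_exp, Complex.neg_re, Complex.ofReal_re, one_mul, ← mul_add,
      mul_left_comm]
    exact mul_le_mul_of_nonneg_left (by linarith) (Real.exp_pos _).le

lemma norm_exp_neg_mul_mul_add_cpow {T v : ℝ} (h : 0 < v + T) (s k : ℂ) :
    ‖Complex.exp (-(s * v)) * ((v:ℂ) + T) ^ k‖ = Real.exp (-(s.re * v)) * (v + T) ^ k.re := by
  rw [norm_mul, Complex.norm_exp, ← Complex.ofReal_add, Complex.norm_cpow_eq_rpow_re_of_pos h]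
  simp

lemma differentiableOn_integral_exp_neg_mul_mul_add_cpow {T : ℝ} (hT : 0 < T) (k : ℂ) :
    DifferentiableOn ℂ (fun s : ℂ ↦ ∫ v in Ioi (0:ℝ), Complex.exp (-(s * v)) * ((v:ℂ) + T) ^ k)
      {s | 0 < s.re} := by
  intro s₀ hs₀
  set r := s₀.re / 2
  have hr : 0 < r := half_pos hs₀
  have hr_eq : s₀.re - r = r := by ring
  refine DifferentiableAt.differentiableWithinAt <| differentiableAt_integral_of_dominated hr
    (bound := fun v ↦ Real.exp (-(r * v)) * (v + T) ^ k.re)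
    (fun s _ ↦ by fun_prop) ?_ ?_ (integrableOn_exp_neg_mul_mul_add_rpow hr hT k.re)
  · exact Eventually.of_forall fun v ↦ (by fun_prop : Differentiable ℂ _).differentiableOn
  · filter_upwards [ae_restrict_mem measurableSet_Ioi] with v (hv : 0 < v)
    intro s hs
    rw [norm_exp_neg_mul_mul_add_cpow (by linarith) s k]
    gcongr
    linarith [re_sub_le_re_of_mem_closedBall hs]

lemma integral_exp_neg_mul_mul_add_cpow_ofReal {T σ : ℝ} (hT : 0 ≤ T) (hσ : 0 < σ) (k : ℂ) :
    ∫ v in Ioi (0:ℝ), Complex.exp (-(σ * v)) * ((v:ℂ) + T) ^ k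
      = (σ:ℂ) ^ (-1 - k) * Complex.exp (σ * T) * uGamma (1 + k) (σ * T) := by
  have hσ' : (σ:ℂ) ≠ 0 := Complex.ofReal_ne_zero.2 hσ.ne'
  have hrescale : ∀ v ∈ Ioi (0:ℝ), Complex.exp (-(σ * v)) * ((v:ℂ) + T) ^ k
      = (σ:ℂ) ^ (-k) * (Complex.exp (-((σ * v : ℝ) : ℂ)) * (((σ * v : ℝ) : ℂ) + σ * T) ^ k) := by
    intro v (hv : 0 < v)
    have : (v:ℂ) + T = ((σ⁻¹ : ℝ) : ℂ) * ((σ * v + σ * T : ℝ) : ℂ) := by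
      push_cast; field_simp
    rw [this, Complex.mul_cpow_ofReal_nonneg (by positivity) (by positivity), Complex.ofReal_inv,
      Complex.inv_cpow _ _ (by simp [Complex.arg_ofReal_of_nonneg hσ.le, Real.pi_ne_zero.symm]),
      ← Complex.cpow_neg]
    push_cast
    ring
  rw [setIntegral_congr_fun measurableSet_Ioi hrescale, integral_const_mul,
    integral_comp_mul_left_Ioi (fun w : ℝ ↦ Complex.exp (-(w:ℂ)) * ((w:ℂ) + σ * T) ^ k) 0 hσ,
    mul_zero, uGamma, add_sub_cancel_left, Complex.real_smul, sub_eq_add_neg,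
    Complex.cpow_add _ _ hσ', Complex.cpow_neg_one]
  set I := ∫ t in Ioi (0:ℝ), Complex.exp (-(t:ℂ)) * ((t:ℂ) + σ * T) ^ k
  have hexp : Complex.exp (σ * T) * Complex.exp (-(σ * T)) = 1 := by
    rw [← Complex.exp_add, add_neg_cancel, Complex.exp_zero]
  push_cast
  linear_combination (-(σ:ℂ)⁻¹ * (σ:ℂ) ^ (-k) * I) * hexp

lemma integral_exp_neg_mul_mul_add_cpow {T : ℝ} (hT : 0 < T) (k : ℂ) {s : ℂ} (hs : 0 < s.re) :
    ∫ v in Ioi (0:ℝ), Complex.exp (-(s * v)) * ((v:ℂ) + T) ^ k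
      = s ^ (-1 - k) * Complex.exp (s * T) * uGamma (1 + k) (s * T) := by
  set U : Set ℂ := {s | 0 < s.re}
  have hU : IsOpen U := isOpen_lt continuous_const Complex.continuous_re
  have hRHS : DifferentiableOn ℂ (fun s : ℂ ↦ s ^ (-1 - k) * Complex.exp (s * T)
      * uGamma (1 + k) (s * T)) U := by
    refine DifferentiableOn.mul (fun s hs ↦ ?_) fun s hs ↦ ?_
    · exact ((differentiableAt_id.cpow_const (Or.inl hs)).mul
        (by fun_prop)).differentiableWithinAt
    · have hsT : 0 < (s * T).re := by simpa [Complex.mul_re] using mul_pos hs hT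
      exact (DifferentiableAt.comp (g := uGamma (1 + k)) s
        ((differentiableOn_uGamma (1 + k)).differentiableAt (hU.mem_nhds hsT))
        (by fun_prop)).differentiableWithinAt
  refine (differentiableOn_integral_exp_neg_mul_mul_add_cpow hT k).analyticOnNhd hU
    |>.eqOn_of_preconnected_of_frequently_eq (hRHS.analyticOnNhd hU)
    (convex_halfSpace_re_gt 0).isPreconnected (z₀ := 1) (by simp) ?_ hs
  have hreal : ∀ᶠ σ : ℝ in 𝓝[≠] 1, 0 < σ :=
    eventually_nhdsWithin_of_eventually_nhds (lt_mem_nhds one_pos)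
  refine ((tendsto_nhdsWithin_of_tendsto_nhds_of_eventually_within _
    ((Complex.continuous_ofReal.tendsto' 1 1 Complex.ofReal_one).mono_left nhdsWithin_le_nhds)
    ?_).frequently (hreal.mono fun σ hσ ↦ ?_).frequently)
  · filter_upwards [self_mem_nhdsWithin] with σ hσ
    simpa using hσ
  · exact integral_exp_neg_mul_mul_add_cpow_ofReal hT.le hσ k

lemma image_exp_neg_Ioi_zero : (fun v : ℝ ↦ Real.exp (-v)) '' Ioi 0 = Ioo 0 1 := by
  rw [show (fun v : ℝ ↦ Real.exp (-v)) = Real.exp ∘ Neg.neg from rfl, image_comp, image_neg_Ioi,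
    neg_zero, Real.image_exp_Iio, Real.exp_zero]

section ExpNegSubstitution

variable {E : Type*} [NormedAddCommGroup E] [NormedSpace ℝ E]

lemma integral_comp_exp_neg_Ioi (g : ℝ → E) :
    ∫ v in Ioi 0, Real.exp (-v) • g (Real.exp (-v)) = ∫ x in Ioo 0 1, g x := by
  rw [← image_exp_neg_Ioi_zero]
  simpa [abs_of_pos (Real.exp_pos _)] using (integral_image_eq_integral_abs_deriv_smul
    measurableSet_Ioi (fun v _ ↦ (Real.hasDerivAt_exp (-v)).comp v (hasDerivAt_neg v)
      |>.hasDerivWithinAt) (fun v _ w _ h ↦ neg_injective (Real.exp_injective h)) g).symm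

lemma integrableOn_comp_exp_neg_Ioi (g : ℝ → E) :
    IntegrableOn (fun v ↦ Real.exp (-v) • g (Real.exp (-v))) (Ioi 0) ↔
      IntegrableOn g (Ioo 0 1) := by
  rw [← image_exp_neg_Ioi_zero]
  simpa [abs_of_pos (Real.exp_pos _)] using (integrableOn_image_iff_integrableOn_abs_deriv_smul
    measurableSet_Ioi (fun v _ ↦ (Real.hasDerivAt_exp (-v)).comp v (hasDerivAt_neg v)
      |>.hasDerivWithinAt) (fun v _ w _ h ↦ neg_injective (Real.exp_injective h)) g).symm

end ExpNegSubstitution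

lemma exp_neg_smul_cpow_mul_neg_log_cpow {a : ℝ} (ha : 0 < a) (s k : ℂ) (v : ℝ) :
    Real.exp (-v) • (((Real.exp (-v) : ℝ) : ℂ) ^ (s - 1) * (-Complex.log (a * Real.exp (-v))) ^ k)
      = Complex.exp (-(s * v)) * ((v:ℂ) + (-Real.log a : ℝ)) ^ k := by
  have hlog : -Complex.log (a * Real.exp (-v)) = (v:ℂ) + (-Real.log a : ℝ) := by
    rw [← Complex.ofReal_mul, ← Complex.ofReal_log (by positivity), Real.log_mul ha.ne'
      (Real.exp_pos _).ne', Real.log_exp]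
    push_cast
    ring
  rw [hlog, Complex.real_smul, Complex.ofReal_exp, Complex.cpow_def_of_ne_zero
    (Complex.exp_ne_zero _), Complex.log_exp (by simp [Real.pi_pos]) (by simp [Real.pi_pos.le]),
    ← mul_assoc, ← Complex.exp_add]
  congr 2
  push_cast
  ring

lemma integrableOn_cpow_mul_neg_log_cpow {a : ℝ} (ha0 : 0 < a) (ha1 : a < 1) (k : ℂ) {s : ℂ}
    (hs : 0 < s.re) :
    IntegrableOn (fun x : ℝ ↦ (x:ℂ) ^ (s - 1) * (-Complex.log (a * x)) ^ k) (Ioo 0 1) := by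
  have hT : 0 < -Real.log a := neg_pos.2 (Real.log_neg ha0 ha1)
  rw [← integrableOn_comp_exp_neg_Ioi]
  simp_rw [exp_neg_smul_cpow_mul_neg_log_cpow ha0]
  refine (integrableOn_exp_neg_mul_mul_add_rpow hs hT k.re).mono' (by fun_prop) ?_
  filter_upwards [ae_restrict_mem measurableSet_Ioi] with v (hv : 0 < v)
  exact (norm_exp_neg_mul_mul_add_cpow (by linarith) s k).le

lemma integral_cpow_mul_neg_log_cpow {a : ℝ} (ha0 : 0 < a) (ha1 : a < 1) (k : ℂ) {s : ℂ}
    (hs : 0 < s.re) :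
    ∫ x in Ioo (0:ℝ) 1, (x:ℂ) ^ (s - 1) * (-Complex.log (a * x)) ^ k
      = (a:ℂ) ^ (-s) * s ^ (-1 - k) * uGamma (1 + k) (-(s * Complex.log a)) := by
  have hT : 0 < -Real.log a := neg_pos.2 (Real.log_neg ha0 ha1)
  have hlog : Complex.log a = ((Real.log a : ℝ) : ℂ) := (Complex.ofReal_log ha0.le).symm
  rw [← integral_comp_exp_neg_Ioi]
  simp_rw [exp_neg_smul_cpow_mul_neg_log_cpow ha0]
  rw [integral_exp_neg_mul_mul_add_cpow hT k hs, Complex.cpow_def_of_ne_zero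
    (Complex.ofReal_ne_zero.2 ha0.ne'), hlog]
  push_cast
  ring_nf

lemma hasSum_log_one_add_of_norm_lt_one {z : ℂ} (hz : ‖z‖ < 1) :
    HasSum (fun j : ℕ ↦ (-z) ^ j * z / (j + 1)) (Complex.log (1 + z)) := by
  have h := (Complex.hasSum_taylorSeries_neg_log' (z := -z) (by rwa [norm_neg])).neg
  rw [sub_neg_eq_add, neg_neg] at h
  exact h.congr_fun fun j ↦ by rw [pow_succ]; ring

lemma norm_ofReal_cpow_le_one {x : ℝ} (hx : x ∈ Ioo 0 1) {b : ℂ} (hb : 0 ≤ b.re) :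
    ‖(x:ℂ) ^ b‖ ≤ 1 := by
  rw [Complex.norm_cpow_eq_rpow_re_of_pos hx.1]
  exact Real.rpow_le_one hx.1.le hx.2.le hb

lemma norm_log_one_add_term_le {x : ℝ} (hx : x ∈ Ioo 0 1) {b : ℂ} (hb : 0 ≤ b.re) (c : ℂ)
    (j : ℕ) : ‖(-c) ^ j * c / (1 + j) * ((x:ℂ) ^ b) ^ (j + 1)‖ ≤ ‖c‖ ^ (j + 1) := by
  have hj : 1 ≤ ‖(1:ℂ) + j‖ := by
    rw [show (1:ℂ) + j = ((1 + j : ℕ) : ℂ) by push_cast; rfl, Complex.norm_natCast]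
    exact_mod_cast Nat.le_add_right 1 j
  simp only [norm_mul, norm_div, norm_pow, norm_neg]
  calc ‖c‖ ^ j * ‖c‖ / ‖(1:ℂ) + j‖ * ‖(x:ℂ) ^ b‖ ^ (j + 1)
      ≤ ‖c‖ ^ j * ‖c‖ / 1 * 1 ^ (j + 1) := by
        gcongr
        exact norm_ofReal_cpow_le_one hx hb
    _ = ‖c‖ ^ (j + 1) := by ring

lemma hasSum_integral_cpow_mul_log_one_add {b c m : ℂ} (hb : 0 < b.re) (hc : ‖c‖ < 1)
    {w : ℝ → ℂ} (hw : IntegrableOn (fun x : ℝ ↦ (x:ℂ) ^ (m - 1) * w x) (Ioo 0 1)) :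
    HasSum (fun j : ℕ ↦ (-c) ^ j * c / (1 + j) *
        ∫ x in Ioo (0:ℝ) 1, (x:ℂ) ^ (b + b * j + m - 1) * w x)
      (∫ x in Ioo (0:ℝ) 1, (x:ℂ) ^ (m - 1) * w x * Complex.log (1 + c * (x:ℂ) ^ b)) := by
  set f : ℝ → ℂ := fun x ↦ (x:ℂ) ^ (m - 1) * w x
  set F : ℕ → ℝ → ℂ := fun j x ↦ (-c) ^ j * c / (1 + j) * ((x:ℂ) ^ b) ^ (j + 1) * f x
  have hF_bound : ∀ j, ∀ x ∈ Ioo (0:ℝ) 1, ‖F j x‖ ≤ ‖c‖ ^ (j + 1) * ‖f x‖ := fun j x hx ↦ by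
    rw [norm_mul]
    exact mul_le_mul_of_nonneg_right (norm_log_one_add_term_le hx hb.le c j) (norm_nonneg _)
  have hF_int : ∀ j, IntegrableOn (F j) (Ioo 0 1) := fun j ↦
    (hw.norm.const_mul _).mono' ((by fun_prop : Measurable fun x : ℝ ↦ (-c) ^ j * c / (1 + j) *
      ((x:ℂ) ^ b) ^ (j + 1)).aestronglyMeasurable.mul hw.aestronglyMeasurable)
      ((ae_restrict_iff' measurableSet_Ioo).2 (Eventually.of_forall (hF_bound j)))
  have hF_sum : Summable fun j ↦ ∫ x in Ioo (0:ℝ) 1, ‖F j x‖ := by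
    refine ((summable_geometric_of_lt_one (norm_nonneg c) hc).mul_right
      (‖c‖ * ∫ x in Ioo (0:ℝ) 1, ‖f x‖)).of_nonneg_of_le
      (fun j ↦ setIntegral_nonneg measurableSet_Ioo fun _ _ ↦ norm_nonneg _) fun j ↦ ?_
    calc ∫ x in Ioo (0:ℝ) 1, ‖F j x‖ ≤ ∫ x in Ioo (0:ℝ) 1, ‖c‖ ^ (j + 1) * ‖f x‖ :=
          setIntegral_mono_on (hF_int j).norm (hw.norm.const_mul _) measurableSet_Ioo (hF_bound j)
      _ = ‖c‖ ^ j * (‖c‖ * ∫ x in Ioo (0:ℝ) 1, ‖f x‖) := by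
          rw [integral_const_mul]
          ring
  have hlim : ∫ x in Ioo (0:ℝ) 1, f x * Complex.log (1 + c * (x:ℂ) ^ b)
      = ∫ x in Ioo (0:ℝ) 1, ∑' j, F j x := by
    refine setIntegral_congr_fun measurableSet_Ioo fun x hx ↦ ?_
    have hz : ‖c * (x:ℂ) ^ b‖ < 1 := by
      rw [norm_mul]
      exact (mul_le_of_le_one_right (norm_nonneg c) (norm_ofReal_cpow_le_one hx hb.le)).trans_lt hc
    rw [← ((hasSum_log_one_add_of_norm_lt_one hz).mul_left (f x)).tsum_eq]
    congr 1
    ext j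
    ring
  rw [hlim]
  refine (hasSum_integral_of_summable_integral_norm hF_int hF_sum).congr_fun fun j ↦ ?_
  rw [← integral_const_mul]
  refine setIntegral_congr_fun measurableSet_Ioo fun x hx ↦ ?_
  have hx0 : (x:ℂ) ≠ 0 := Complex.ofReal_ne_zero.2 hx.1.ne'
  rw [show b + b * j + m - 1 = ((j + 1 : ℕ) : ℂ) * b + (m - 1) by push_cast; ring,
    Complex.cpow_add _ _ hx0, Complex.cpow_nat_mul]
  ring

theorem stmt4 (a : ℝ) (ha0 : 0 < a) (ha1 : a < 1) (b c k m : ℂ)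
    (hb : 0 < b.re) (hm : 0 < m.re) (hc : ‖c‖ < 1) :
    (∫ x in (0:ℝ)..1, (x:ℂ) ^ (m - 1) * (-(Complex.log ((a:ℂ) * (x:ℂ)))) ^ k
        * Complex.log (1 + c * (x:ℂ) ^ b))
    = ∑' j : ℕ, (a:ℂ) ^ (-(b * (1 + (j:ℂ))) - m) * (-c) ^ j * c
        * (b + b * (j:ℂ) + m) ^ (-1 - k)
        * uGamma (1 + k) (-((b + b * (j:ℂ) + m) * Complex.log (a:ℂ))) / (1 + (j:ℂ)) := by
  have hs : ∀ j : ℕ, 0 < (b + b * j + m).re := fun j ↦ by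
    simp only [Complex.add_re, Complex.mul_re, Complex.natCast_re, Complex.natCast_im, mul_zero,
      sub_zero]
    positivity
  rw [intervalIntegral.integral_of_le zero_le_one, integral_Ioc_eq_integral_Ioo,
    ← (hasSum_integral_cpow_mul_log_one_add hb hc
      (integrableOn_cpow_mul_neg_log_cpow ha0 ha1 k hm)).tsum_eq]
  refine tsum_congr fun j ↦ ?_
  rw [integral_cpow_mul_neg_log_cpow ha0 ha1 k (hs j),
    show -(b * (1 + j)) - m = -(b + b * j + m) by ring]
  ring
end

section
/- Let a, b ∈ ℝ with 0 < b, 0 < a and a b < 1, let α ∈ ℂ ∖ (−∞, 0], and let k, m, v ∈ ℂ with Re(m + v) > 0. Then ∫₀^b x^{m−1} J_v(x α) (−log(a x))^k dx = a^{−m} · Σ_{j=0}^∞ (−1)^j (α/(2a))^{2j+v} · Γ(1+k, −(2j + m + v) log(a b)) / ( j! · Γ(1+j+v) · (2j + m + v)^{k+1} ). -/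
open MeasureTheory

/-- Bessel function of the first kind:
`J_ν(w) = Σ_{j=0}^∞ (-1)^j (w/2)^{2j+ν} / (j! Γ(j+ν+1))`, principal-branch powers. -/
noncomputable def besselJ (ν w : ℂ) : ℂ :=
  ∑' j : ℕ, ((-1:ℂ) ^ j * (w / 2) ^ (2 * (j:ℂ) + ν))
    / ((Nat.factorial j : ℂ) * Complex.Gamma ((j:ℂ) + ν + 1))

/-!
Substituting `x = e^{-L u} / a` with `L = -log (a b) > 0` turns
`∫₀^b x^{s-1} (-log (a x))^k dx` into `a^{-s} L^{k+1} ∫₁^∞ e^{-s L u} u^k du`. For real `z > 0` the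
substitution `t = z (u - 1)` gives `Γ(1 + k, z) = z^{k+1} ∫₁^∞ e^{-z u} u^k du`; both sides are
holomorphic on the right half-plane, so this holds for all `Re z > 0` by analytic continuation.
The theorem follows by expanding `J_v` into its power series and integrating termwise, which is
legitimate because the Bessel coefficients decay faster than any geometric sequence.
-/

open Set Filter Real Topology
open scoped Complex

lemma ofReal_mul_cpow {r : ℝ} (hr : 0 ≤ r) (z w : ℂ) :
    ((r : ℂ) * z) ^ w = (r : ℂ) ^ w * z ^ w := by
  rcases hr.eq_or_lt with rfl | hr
  · rcases eq_or_ne w 0 with rfl | hw <;> simp [Complex.zero_cpow, *]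
  rcases eq_or_ne z 0 with rfl | hz
  · rcases eq_or_ne w 0 with rfl | hw <;> simp [Complex.zero_cpow, *]
  have hr' : (r : ℂ) ≠ 0 := by exact_mod_cast hr.ne'
  rw [Complex.cpow_def_of_ne_zero (mul_ne_zero hr' hz), Complex.cpow_def_of_ne_zero hr',
    Complex.cpow_def_of_ne_zero hz, Complex.log_ofReal_mul hr hz, ← Complex.exp_add,
    Complex.ofReal_log hr.le, add_mul]

lemma ofReal_exp_cpow (t : ℝ) (s : ℂ) : ((rexp t : ℝ) : ℂ) ^ s = cexp (t * s) := by
  rw [Complex.cpow_def_of_ne_zero (by exact_mod_cast (Real.exp_pos t).ne'),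
    ← Complex.ofReal_log (Real.exp_pos t).le, Real.log_exp]

lemma integrableOn_exp_neg_mul_mul_add_rpow_s18 {ε : ℝ} (hε : 0 < ε) {A L : ℝ} (hAL : 0 < A + L)
    (c : ℝ) : IntegrableOn (fun τ : ℝ => rexp (-(ε * τ)) * (τ + L) ^ c) (Ioi A) := by
  have hcont : ContinuousOn (fun τ : ℝ => rexp (-(ε * τ)) * (τ + L) ^ c) (Ici A) :=
    (Continuous.continuousOn (by fun_prop)).mul
      ((continuousOn_id.add continuousOn_const).rpow_const fun τ (hτ : A ≤ τ) =>
        Or.inl (show τ + L ≠ 0 by linarith))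
  refine integrable_of_isBigO_exp_neg (half_pos hε) hcont ?_
  have hlim : Tendsto (fun τ : ℝ => rexp (ε / 2 * L) * ((τ + L) ^ c * rexp (-(ε / 2) * (τ + L))))
      atTop (𝓝 0) := by
    simpa using ((tendsto_rpow_mul_exp_neg_mul_atTop_nhds_zero c (ε / 2) (half_pos hε)).comp
      (tendsto_atTop_add_const_right _ L tendsto_id)).const_mul (rexp (ε / 2 * L))
  refine Asymptotics.isBigO_of_div_tendsto_nhds (Eventually.of_forall fun τ h =>
    absurd h (Real.exp_ne_zero _)) _ (hlim.congr fun τ => ?_)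
  simp only [Pi.div_apply]
  rw [mul_left_comm, ← Real.exp_add, mul_comm (rexp _), mul_div_assoc, ← Real.exp_sub]
  ring_nf

lemma norm_cpow_le_of_le_re {w c : ℂ} {δ R : ℝ} (hδ : 0 < δ) (hδw : δ ≤ w.re) (hwR : ‖w‖ ≤ R) :
    ‖w ^ c‖ ≤ rexp (π * |c.im|) * (R ^ c.re + δ ^ c.re) := by
  have hw : δ ≤ ‖w‖ := hδw.trans (Complex.re_le_norm w)
  have hw0 : w ≠ 0 := by rintro rfl; simp at hw; linarith
  rw [Complex.norm_cpow_of_ne_zero hw0, div_eq_mul_inv, ← Real.exp_neg, mul_comm]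
  refine mul_le_mul (Real.exp_le_exp.mpr ?_) ?_ (by positivity) (Real.exp_pos _).le
  · calc -(w.arg * c.im) ≤ |w.arg| * |c.im| := by rw [← abs_mul]; exact neg_le_abs _
      _ ≤ π * |c.im| := by gcongr; exact Complex.abs_arg_le_pi w
  · rcases le_total 0 c.re with hc | hc
    · have := Real.rpow_le_rpow (norm_nonneg w) hwR hc
      have := Real.rpow_nonneg hδ.le c.re
      linarith
    · have := Real.rpow_le_rpow_of_nonpos hδ hw hc
      have := Real.rpow_nonneg (hδ.le.trans (hw.trans hwR)) c.re
      linarith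

lemma half_re_le_re_of_mem_ball {z₀ z : ℂ} (hz : z ∈ Metric.ball z₀ (z₀.re / 2)) :
    z₀.re / 2 ≤ z.re := by
  have := (Complex.abs_re_le_norm (z - z₀)).trans (mem_ball_iff_norm.mp hz).le
  rw [Complex.sub_re] at this
  linarith [(abs_le.mp this).1]

lemma integrableOn_cexp_neg_mul_cpow (k : ℂ) {z : ℂ} (hz : 0 < z.re) :
    IntegrableOn (fun u : ℝ => cexp (-(z * u)) * (u : ℂ) ^ k) (Ioi 1) := by
  refine (integrableOn_exp_neg_mul_mul_add_rpow_s18 hz (by norm_num : (0:ℝ) < 1 + 0) k.re).mono'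
    (by fun_prop) ((ae_restrict_iff' measurableSet_Ioi).mpr (.of_forall fun u (hu : 1 < u) => ?_))
  rw [norm_mul, Complex.norm_exp, Complex.norm_cpow_eq_rpow_re_of_pos (by linarith), add_zero]
  simp

lemma differentiableOn_integral_cexp_neg_mul_cpow (k : ℂ) :
    DifferentiableOn ℂ (fun z : ℂ => ∫ u in Ioi (1:ℝ), cexp (-(z * u)) * (u : ℂ) ^ k)
      {z | 0 < z.re} := by
  intro z₀ (hz₀ : 0 < z₀.re)
  have hδ : 0 < z₀.re / 2 := half_pos hz₀
  refine (hasDerivAt_integral_of_dominated_loc_of_deriv_le (μ := volume.restrict (Ioi 1))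
    (F := fun z (u : ℝ) => cexp (-(z * u)) * (u : ℂ) ^ k) (Metric.ball_mem_nhds z₀ hδ)
    (.of_forall fun z => by fun_prop) (integrableOn_cexp_neg_mul_cpow k hz₀)
    (F' := fun z (u : ℝ) => -(u : ℂ) * cexp (-(z * u)) * (u : ℂ) ^ k) (by fun_prop) ?_
    (integrableOn_exp_neg_mul_mul_add_rpow_s18 hδ (by norm_num : (0:ℝ) < 1 + 0) (k.re + 1)) ?_
    ).2.differentiableAt.differentiableWithinAt
  · refine (ae_restrict_iff' measurableSet_Ioi).mpr (.of_forall fun u (hu : 1 < u) z hz => ?_)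
    have hre := half_re_le_re_of_mem_ball hz
    rw [norm_mul, norm_mul, norm_neg, Complex.norm_real, Real.norm_of_nonneg (by linarith),
      Complex.norm_exp, Complex.norm_cpow_eq_rpow_re_of_pos (by linarith), add_zero,
      Real.rpow_add_one (by linarith)]
    simp only [Complex.neg_re, Complex.mul_re, Complex.ofReal_re, Complex.ofReal_im, mul_zero,
      sub_zero]
    have : rexp (-(z.re * u)) ≤ rexp (-(z₀.re / 2 * u)) := Real.exp_le_exp.mpr (by nlinarith)
    have := Real.rpow_nonneg (by linarith : (0:ℝ) ≤ u) k.re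
    calc u * rexp (-(z.re * u)) * u ^ k.re ≤ u * rexp (-(z₀.re / 2 * u)) * u ^ k.re := by gcongr
      _ = _ := by ring
  · refine .of_forall fun u z _ => ?_
    simpa [mul_comm] using ((hasDerivAt_mul_const (u : ℂ)).neg.cexp).mul_const ((u : ℂ) ^ k)

lemma exists_integrableOn_bound_cexp_neg_mul_cpow_add (c : ℂ) {z₀ : ℂ} (hz₀ : 0 < z₀.re) :
    ∃ g : ℝ → ℝ, IntegrableOn g (Ioi 0) ∧ ∀ t : ℝ, 0 < t → ∀ z ∈ Metric.ball z₀ (z₀.re / 2),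
      ‖cexp (-(t:ℂ)) * ((t:ℂ) + z) ^ c‖ ≤ g t := by
  set δ := z₀.re / 2
  set M := ‖z₀‖ + δ
  have hδ : 0 < δ := half_pos hz₀
  refine ⟨fun t => rexp (π * |c.im|) *
      (rexp (-(1 * t)) * (t + M) ^ c.re + δ ^ c.re * rexp (-1 * t)),
    ((integrableOn_exp_neg_mul_mul_add_rpow_s18 one_pos (by positivity) c.re).add
      ((exp_neg_integrableOn_Ioi 0 one_pos).const_mul _)).const_mul _, fun t ht z hz => ?_⟩
  have hw := norm_cpow_le_of_le_re (c := c) (w := (t:ℂ) + z) (R := t + M) hδ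
    (by have : δ ≤ z.re := half_re_le_re_of_mem_ball hz; simp; linarith)
    ((norm_add_le _ _).trans (by
      rw [Complex.norm_real, Real.norm_of_nonneg ht.le]
      linarith [norm_le_norm_add_norm_sub' z z₀, (mem_ball_iff_norm.mp hz).le]))
  rw [norm_mul, Complex.norm_exp, Complex.neg_re, Complex.ofReal_re]
  calc rexp (-t) * ‖((t:ℂ) + z) ^ c‖
      ≤ rexp (-t) * (rexp (π * |c.im|) * ((t + M) ^ c.re + δ ^ c.re)) := by gcongr
    _ = _ := by ring_nf

lemma differentiableOn_integral_cexp_neg_mul_cpow_add (k : ℂ) :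
    DifferentiableOn ℂ (fun z : ℂ => ∫ t in Ioi (0:ℝ), cexp (-(t:ℂ)) * ((t:ℂ) + z) ^ k)
      {z | 0 < z.re} := by
  intro z₀ (hz₀ : 0 < z₀.re)
  obtain ⟨g, hg, hFg⟩ := exists_integrableOn_bound_cexp_neg_mul_cpow_add k hz₀
  obtain ⟨g', hg', hF'g'⟩ := exists_integrableOn_bound_cexp_neg_mul_cpow_add (k - 1) hz₀
  refine (hasDerivAt_integral_of_dominated_loc_of_deriv_le (μ := volume.restrict (Ioi 0))
    (F := fun z (t : ℝ) => cexp (-(t:ℂ)) * ((t:ℂ) + z) ^ k)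
    (F' := fun z (t : ℝ) => cexp (-(t:ℂ)) * (k * ((t:ℂ) + z) ^ (k - 1)))
    (Metric.ball_mem_nhds z₀ (half_pos hz₀)) (.of_forall fun z => by fun_prop)
    (hg.mono' (by fun_prop) ?_) (by fun_prop) ?_ (hg'.const_mul ‖k‖) ?_
    ).2.differentiableAt.differentiableWithinAt
  · exact (ae_restrict_iff' measurableSet_Ioi).mpr (.of_forall fun t ht =>
      hFg t ht z₀ (Metric.mem_ball_self (half_pos hz₀)))
  · refine (ae_restrict_iff' measurableSet_Ioi).mpr (.of_forall fun t ht z hz => ?_)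
    rw [mul_left_comm, norm_mul]
    exact mul_le_mul_of_nonneg_left (hF'g' t ht z hz) (norm_nonneg k)
  · refine (ae_restrict_iff' measurableSet_Ioi).mpr (.of_forall fun t (ht : 0 < t) z hz => ?_)
    have hre : 0 < ((t:ℂ) + z).re := by
      have := half_re_le_re_of_mem_ball hz
      simp only [Complex.add_re, Complex.ofReal_re]; linarith
    simpa using (((hasDerivAt_id z).const_add (t:ℂ)).cpow_const
      (Complex.mem_slitPlane_iff.mpr (Or.inl hre))).const_mul (cexp (-(t:ℂ)))

lemma uGamma_one_add_ofReal_eq_cpow_mul_integral (k : ℂ) {σ : ℝ} (hσ : 0 < σ) :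
    uGamma (1 + k) σ = (σ : ℂ) ^ (k + 1) * ∫ u in Ioi (1:ℝ), cexp (-(σ * u)) * (u : ℂ) ^ k := by
  have himage : (fun u : ℝ => σ * (u - 1)) '' Ioi 1 = Ioi 0 := by
    ext t
    refine ⟨?_, fun (ht : 0 < t) => ⟨t / σ + 1, ?_, ?_⟩⟩
    · rintro ⟨u, hu : 1 < u, rfl⟩
      exact mul_pos hσ (by linarith)
    · show 1 < t / σ + 1; linarith [div_pos ht hσ]
    · field_simp; ring
  have hderiv : ∀ u ∈ Ioi (1:ℝ), HasDerivWithinAt (fun u : ℝ => σ * (u - 1)) σ (Ioi 1) u :=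
    fun u _ => by simpa using (((hasDerivAt_id u).sub_const 1).const_mul σ).hasDerivWithinAt
  rw [uGamma, add_sub_cancel_left, ← himage, integral_image_eq_integral_abs_deriv_smul
    measurableSet_Ioi hderiv (fun u _ v _ h => by simpa [hσ.ne'] using h),
    ← integral_const_mul, ← integral_const_mul]
  refine setIntegral_congr_fun measurableSet_Ioi fun u (hu : 1 < u) => ?_
  have hσu : ((σ * (u - 1) : ℝ) : ℂ) + σ = (σ : ℂ) * u := by push_cast; ring
  rw [hσu, Complex.mul_cpow_ofReal_nonneg hσ.le (by linarith),
    Complex.cpow_add _ _ (by exact_mod_cast hσ.ne'), Complex.cpow_one, abs_of_pos hσ,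
    Complex.real_smul]
  have hexp : cexp (-σ) * cexp (-((σ * (u - 1) : ℝ) : ℂ)) = cexp (-(σ * u)) := by
    rw [← Complex.exp_add]; push_cast; ring_nf
  linear_combination (σ : ℂ) * (σ : ℂ) ^ k * (u : ℂ) ^ k * hexp

lemma uGamma_one_add_eq_cpow_mul_integral (k : ℂ) {z : ℂ} (hz : 0 < z.re) :
    uGamma (1 + k) z = z ^ (k + 1) * ∫ u in Ioi (1:ℝ), cexp (-(z * u)) * (u : ℂ) ^ k := by
  have hU : IsOpen {z : ℂ | 0 < z.re} := isOpen_lt continuous_const Complex.continuous_re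
  have hlhs : AnalyticOnNhd ℂ (uGamma (1 + k)) {z | 0 < z.re} := by
    refine DifferentiableOn.analyticOnNhd ?_ hU
    rw [show uGamma (1 + k) = fun z => cexp (-z) *
      ∫ t in Ioi (0:ℝ), cexp (-(t:ℂ)) * ((t:ℂ) + z) ^ k by ext; rw [uGamma, add_sub_cancel_left]]
    exact (Complex.differentiable_exp.comp differentiable_neg).differentiableOn.mul
      (differentiableOn_integral_cexp_neg_mul_cpow_add k)
  have hrhs : AnalyticOnNhd ℂ (fun z : ℂ => z ^ (k + 1) *
      ∫ u in Ioi (1:ℝ), cexp (-(z * u)) * (u : ℂ) ^ k) {z | 0 < z.re} :=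
    ((differentiableOn_id.cpow_const fun z (hz : 0 < z.re) =>
      Complex.mem_slitPlane_iff.mpr (Or.inl hz)).mul
      (differentiableOn_integral_cexp_neg_mul_cpow k)).analyticOnNhd hU
  have hreal : ∃ᶠ x : ℝ in 𝓝[≠] 1, uGamma (1 + k) x =
      (x : ℂ) ^ (k + 1) * ∫ u in Ioi (1:ℝ), cexp (-(x * u)) * (u : ℂ) ^ k :=
    (eventually_nhdsWithin_of_eventually_nhds (lt_mem_nhds one_pos)).frequently.mono
      fun x hx => uGamma_one_add_ofReal_eq_cpow_mul_integral k hx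
  have hmaps : Tendsto ((↑) : ℝ → ℂ) (𝓝[≠] 1) (𝓝[≠] 1) :=
    Complex.continuous_ofReal.continuousWithinAt.tendsto_nhdsWithin fun x hx => by
      simpa using hx
  exact hlhs.eqOn_of_preconnected_of_frequently_eq hrhs
    (convex_halfSpace_re_gt 0).isPreconnected (by simp) (hmaps.frequently hreal) hz

section ExpSubstitution

lemma image_exp_neg_mul_div_Ici {a L : ℝ} (ha : 0 < a) (hL : 0 < L) :
    (fun u : ℝ => rexp (-(L * u)) / a) '' Ici 1 = Ioc 0 (rexp (-L) / a) := by
  ext x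
  refine ⟨?_, fun ⟨hx, hxb⟩ => ⟨-Real.log (a * x) / L, ?_, ?_⟩⟩
  · rintro ⟨u, hu : 1 ≤ u, rfl⟩
    refine ⟨by positivity, div_le_div_of_nonneg_right (Real.exp_le_exp.mpr ?_) ha.le⟩
    nlinarith
  · rw [mem_Ici, le_div_iff₀ hL, one_mul, le_neg, ← Real.exp_le_exp, Real.exp_log (by positivity)]
    rwa [le_div_iff₀ ha, mul_comm] at hxb
  · simp only [mul_div_cancel₀ _ hL.ne', neg_neg, Real.exp_log (mul_pos ha hx)]
    field_simp

lemma hasDerivWithinAt_exp_neg_mul_div (a L : ℝ) (s : Set ℝ) (u : ℝ) :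
    HasDerivWithinAt (fun u : ℝ => rexp (-(L * u)) / a) (-(L * rexp (-(L * u))) / a) s u := by
  simpa [mul_comm] using ((((hasDerivAt_id u).const_mul L).neg.exp).div_const a).hasDerivWithinAt

lemma injOn_exp_neg_mul_div {a L : ℝ} (ha : 0 < a) (hL : 0 < L) (s : Set ℝ) :
    InjOn (fun u : ℝ => rexp (-(L * u)) / a) s := fun u _ v _ h => by
  simpa [ha.ne', hL.ne'] using h

variable {E : Type*} [NormedAddCommGroup E] [NormedSpace ℝ E]

lemma integral_Ioc_eq_integral_Ici_exp_neg_mul {a L : ℝ} (ha : 0 < a) (hL : 0 < L) (g : ℝ → E) :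
    ∫ x in Ioc 0 (rexp (-L) / a), g x =
      ∫ u in Ici 1, |-(L * rexp (-(L * u))) / a| • g (rexp (-(L * u)) / a) := by
  rw [← image_exp_neg_mul_div_Ici ha hL, integral_image_eq_integral_abs_deriv_smul measurableSet_Ici
    (fun u _ => hasDerivWithinAt_exp_neg_mul_div a L _ u) (injOn_exp_neg_mul_div ha hL _)]

lemma integrableOn_Ioc_iff_integrableOn_Ici_exp_neg_mul {a L : ℝ} (ha : 0 < a) (hL : 0 < L)
    (g : ℝ → E) :
    IntegrableOn g (Ioc 0 (rexp (-L) / a)) ↔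
      IntegrableOn (fun u => |-(L * rexp (-(L * u))) / a| • g (rexp (-(L * u)) / a)) (Ici 1) := by
  rw [← image_exp_neg_mul_div_Ici ha hL, integrableOn_image_iff_integrableOn_abs_deriv_smul
    measurableSet_Ici (fun u _ => hasDerivWithinAt_exp_neg_mul_div a L _ u)
    (injOn_exp_neg_mul_div ha hL _)]

end ExpSubstitution

lemma abs_deriv_smul_cpow_mul_neg_log_cpow {a L u : ℝ} (ha : 0 < a) (hL : 0 < L)
    (s k : ℂ) :
    |-(L * rexp (-(L * u))) / a| • (((rexp (-(L * u)) / a : ℝ) : ℂ) ^ (s - 1) *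
      (-Complex.log (a * (rexp (-(L * u)) / a : ℝ))) ^ k)
      = (a : ℂ) ^ (-s) * (L : ℂ) ^ (k + 1) * (cexp (-(s * L * u)) * (u : ℂ) ^ k) := by
  set x := rexp (-(L * u)) / a with hx
  have hx0 : (x : ℂ) ≠ 0 := by exact_mod_cast (show 0 < x by positivity).ne'
  have hax : ((a * x : ℝ) : ℂ) = ((rexp (-(L * u)) : ℝ) : ℂ) := by rw [hx, mul_div_cancel₀ _ ha.ne']
  have habs : |-(L * rexp (-(L * u))) / a| = L * x := by
    rw [abs_div, abs_neg, abs_of_pos ha, abs_of_pos (by positivity), mul_div_assoc]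
  have hlog : -Complex.log (a * x) = ((L * u : ℝ) : ℂ) := by
    rw [← Complex.ofReal_mul, hax, ← Complex.ofReal_log (Real.exp_pos _).le, Real.log_exp]
    push_cast; ring
  have hpow : (a : ℂ) ^ s * (x : ℂ) ^ s = cexp (-(s * L * u)) := by
    rw [← ofReal_mul_cpow ha.le, ← Complex.ofReal_mul, hax, ofReal_exp_cpow]; push_cast; ring_nf
  have has : (a : ℂ) ^ s ≠ 0 := by simp [Complex.cpow_eq_zero_iff, ha.ne']
  rw [habs, hlog, Complex.ofReal_mul L u, ofReal_mul_cpow hL.le, Complex.real_smul,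
    ← hpow, Complex.cpow_neg, Complex.cpow_add _ _ (by exact_mod_cast hL.ne'), Complex.cpow_one,
    Complex.cpow_sub _ _ hx0, Complex.cpow_one]
  push_cast
  field_simp

lemma exp_neg_neg_log_div {a b : ℝ} (ha : 0 < a) (hb : 0 < b) :
    rexp (-(-Real.log (a * b))) / a = b := by
  rw [neg_neg, Real.exp_log (mul_pos ha hb), mul_div_cancel_left₀ _ ha.ne']

lemma integrableOn_Ioc_cpow_mul_neg_log_cpow {a b : ℝ} (ha : 0 < a) (hb : 0 < b) (hab : a * b < 1)
    (k : ℂ) {s : ℂ} (hs : 0 < s.re) :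
    IntegrableOn (fun x : ℝ => (x : ℂ) ^ (s - 1) * (-Complex.log (a * x)) ^ k) (Ioc 0 b) := by
  set L := -Real.log (a * b)
  have hL : 0 < L := neg_pos.mpr (Real.log_neg (by positivity) hab)
  rw [← exp_neg_neg_log_div ha hb, integrableOn_Ioc_iff_integrableOn_Ici_exp_neg_mul ha hL,
    integrableOn_Ici_iff_integrableOn_Ioi]
  exact IntegrableOn.congr_fun ((integrableOn_cexp_neg_mul_cpow k (z := s * L)
    (by simpa using mul_pos hs hL)).const_mul ((a : ℂ) ^ (-s) * (L : ℂ) ^ (k + 1)))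
    (fun u _ => (abs_deriv_smul_cpow_mul_neg_log_cpow ha hL s k).symm) measurableSet_Ioi

lemma integral_Ioc_cpow_mul_neg_log_cpow {a b : ℝ} (ha : 0 < a) (hb : 0 < b) (hab : a * b < 1)
    (k : ℂ) {s : ℂ} (hs : 0 < s.re) :
    ∫ x in Ioc 0 b, (x : ℂ) ^ (s - 1) * (-Complex.log (a * x)) ^ k
      = (a : ℂ) ^ (-s) * uGamma (1 + k) (-(s * Complex.log (a * b))) / s ^ (k + 1) := by
  set L := -Real.log (a * b) with hLdef
  have hL : 0 < L := neg_pos.mpr (Real.log_neg (by positivity) hab)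
  have hsL : 0 < (s * L).re := by simpa using mul_pos hs hL
  have hz : -(s * Complex.log (a * b)) = s * L := by
    rw [hLdef, ← Complex.ofReal_mul, ← Complex.ofReal_log (by positivity)]; push_cast; ring
  have hs0 : s ^ (k + 1) ≠ 0 := by
    rw [Ne, Complex.cpow_eq_zero_iff]; rintro ⟨rfl, -⟩; simp at hs
  have hL0 : (L : ℂ) ^ (k + 1) ≠ 0 := by simp [Complex.cpow_eq_zero_iff, hL.ne']
  nth_rw 1 [← exp_neg_neg_log_div ha hb]
  rw [integral_Ioc_eq_integral_Ici_exp_neg_mul ha hL, integral_Ici_eq_integral_Ioi,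
    setIntegral_congr_fun measurableSet_Ioi
      (fun u _ => abs_deriv_smul_cpow_mul_neg_log_cpow ha hL s k), integral_const_mul, hz,
    uGamma_one_add_eq_cpow_mul_integral k hsL, mul_comm s, ofReal_mul_cpow hL.le]
  field_simp

lemma integral_tsum_mul_of_norm_le {X : Type*} [MeasurableSpace X] {μ : Measure X}
    {c : ℕ → ℂ} {g : ℕ → X → ℂ} {h : X → ℂ} {B : ℕ → ℝ} (hh : Integrable h μ)
    (hg : ∀ j, AEStronglyMeasurable (g j) μ) (hgB : ∀ j, ∀ᵐ x ∂μ, ‖g j x‖ ≤ B j)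
    (hB : Summable fun j => ‖c j‖ * B j) :
    ∫ x, ∑' j, c j * g j x * h x ∂μ = ∑' j, c j * ∫ x, g j x * h x ∂μ := by
  have hint : ∀ j, Integrable (fun x => c j * g j x * h x) μ := fun j => by
    simpa only [mul_assoc] using (hh.bdd_mul (hg j) (hgB j)).const_mul (c j)
  have hnorm : ∀ j, ∫ x, ‖c j * g j x * h x‖ ∂μ ≤ ‖c j‖ * B j * ∫ x, ‖h x‖ ∂μ := fun j => by
    rw [← integral_const_mul]
    refine integral_mono_ae (hint j).norm (hh.norm.const_mul _) ((hgB j).mono fun x hx => ?_)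
    simp only [norm_mul, mul_assoc]
    gcongr
  rw [← integral_tsum_of_summable_integral_norm hint (Summable.of_nonneg_of_le
    (fun j => integral_nonneg fun x => norm_nonneg _) hnorm (hB.mul_right _))]
  simp only [mul_assoc, integral_const_mul]

noncomputable def besselCoeff (ν α : ℂ) (j : ℕ) : ℂ :=
  (-1) ^ j * (α / 2) ^ (2 * (j : ℂ) + ν) / ((Nat.factorial j : ℂ) * Complex.Gamma ((j : ℂ) + ν + 1))

lemma besselJ_ofReal_mul {x : ℝ} (hx : 0 ≤ x) (ν α : ℂ) :
    besselJ ν (x * α) = ∑' j, besselCoeff ν α j * (x : ℂ) ^ (2 * (j : ℂ) + ν) := by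
  refine tsum_congr fun j => ?_
  rw [besselCoeff, mul_div_assoc, mul_div_assoc, ofReal_mul_cpow hx]
  ring

lemma besselCoeff_succ {ν α : ℂ} (hα : α ≠ 0) {j : ℕ} (hj : (j : ℂ) + ν + 1 ≠ 0) :
    besselCoeff ν α (j + 1) =
      besselCoeff ν α j * (-(α / 2) ^ 2 / (((j : ℂ) + 1) * ((j : ℂ) + ν + 1))) := by
  have hpow : (α / 2) ^ (2 * ((j + 1 : ℕ) : ℂ) + ν) =
      (α / 2) ^ (2 * (j : ℂ) + ν) * (α / 2) ^ 2 := by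
    rw [← Complex.cpow_natCast, ← Complex.cpow_add _ _ (div_ne_zero hα two_ne_zero)]
    push_cast; ring_nf
  have hGamma : Complex.Gamma (((j + 1 : ℕ) : ℂ) + ν + 1) =
      ((j : ℂ) + ν + 1) * Complex.Gamma ((j : ℂ) + ν + 1) := by
    rw [← Complex.Gamma_add_one _ hj]; push_cast; ring_nf
  rw [besselCoeff, besselCoeff, hpow, hGamma, Nat.factorial_succ]
  push_cast
  field_simp
  ring

lemma summable_norm_besselCoeff_mul_pow {ν α : ℂ} (hα : α ≠ 0) {r : ℝ} (hr : 0 ≤ r) :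
    Summable fun j => ‖besselCoeff ν α j‖ * r ^ j := by
  refine summable_of_ratio_norm_eventually_le (r := 1 / 2) (by norm_num) ?_
  obtain ⟨N, hN⟩ := exists_nat_ge (max ‖ν‖ (2 * ‖α / 2‖ ^ 2 * r))
  filter_upwards [eventually_ge_atTop N] with j hj
  have hjN : max ‖ν‖ (2 * ‖α / 2‖ ^ 2 * r) ≤ j := hN.trans (by exact_mod_cast hj)
  have hnorm : 1 ≤ ‖(j : ℂ) + ν + 1‖ := by
    have := norm_le_norm_add_norm_sub' ((j + 1 : ℕ) : ℂ) ((j : ℂ) + ν + 1)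
    rw [Complex.norm_natCast, show ((j + 1 : ℕ) : ℂ) - ((j : ℂ) + ν + 1) = -ν by push_cast; ring,
      norm_neg] at this
    push_cast at this
    linarith [le_max_left ‖ν‖ (2 * ‖α / 2‖ ^ 2 * r)]
  have hj0 : (j : ℂ) + ν + 1 ≠ 0 := fun h => by norm_num [h] at hnorm
  have hratio : ‖α / 2‖ ^ 2 * r / (((j : ℝ) + 1) * ‖(j : ℂ) + ν + 1‖) ≤ 1 / 2 := by
    rw [div_le_iff₀ (by positivity)]
    nlinarith [le_max_right ‖ν‖ (2 * ‖α / 2‖ ^ 2 * r), norm_nonneg ((j : ℂ) + ν + 1)]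
  rw [Real.norm_of_nonneg (by positivity), Real.norm_of_nonneg (by positivity),
    besselCoeff_succ hα hj0, norm_mul, norm_div, norm_neg, norm_mul, norm_pow,
    show ‖(j : ℂ) + 1‖ = (j : ℝ) + 1 by exact_mod_cast Complex.norm_natCast (j + 1)]
  calc ‖besselCoeff ν α j‖ * (‖α / 2‖ ^ 2 / (((j : ℝ) + 1) * ‖(j : ℂ) + ν + 1‖)) * r ^ (j + 1)
      = ‖besselCoeff ν α j‖ * r ^ j * (‖α / 2‖ ^ 2 * r / (((j : ℝ) + 1) * ‖(j : ℂ) + ν + 1‖)) := by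
        ring
    _ ≤ ‖besselCoeff ν α j‖ * r ^ j * (1 / 2) := by gcongr
    _ = 1 / 2 * (‖besselCoeff ν α j‖ * r ^ j) := by ring

lemma cpow_mul_besselJ_ofReal_mul {x : ℝ} (hx : 0 < x) (m ν α w : ℂ) :
    (x : ℂ) ^ (m - 1) * besselJ ν (x * α) * w =
      ∑' j : ℕ, besselCoeff ν α j * (x : ℂ) ^ (2 * j) * ((x : ℂ) ^ (m + ν - 1) * w) := by
  have hx0 : (x : ℂ) ≠ 0 := by exact_mod_cast hx.ne'
  rw [besselJ_ofReal_mul hx.le, ← tsum_mul_left, ← tsum_mul_right]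
  refine tsum_congr fun j => ?_
  have hsplit : (x : ℂ) ^ (m - 1) * (x : ℂ) ^ (2 * (j : ℂ) + ν) =
      (x : ℂ) ^ (2 * j) * (x : ℂ) ^ (m + ν - 1) := by
    rw [← Complex.cpow_natCast, ← Complex.cpow_add _ _ hx0, ← Complex.cpow_add _ _ hx0]
    push_cast; ring_nf
  linear_combination besselCoeff ν α j * w * hsplit

lemma integral_Ioc_pow_mul_cpow_mul_neg_log_cpow {a b : ℝ} (ha : 0 < a) (hb : 0 < b)
    (hab : a * b < 1) (k : ℂ) {s : ℂ} (hs : 0 < s.re) (n : ℕ) :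
    ∫ x in Ioc 0 b, (x : ℂ) ^ n * ((x : ℂ) ^ (s - 1) * (-Complex.log (a * x)) ^ k)
      = (a : ℂ) ^ (-(n + s)) * uGamma (1 + k) (-((n + s) * Complex.log (a * b))) /
          (n + s) ^ (k + 1) := by
  rw [← integral_Ioc_cpow_mul_neg_log_cpow ha hb hab k
    (by simpa using add_pos_of_nonneg_of_pos n.cast_nonneg hs)]
  refine setIntegral_congr_fun measurableSet_Ioc fun x (hx : 0 < x ∧ x ≤ b) => ?_
  have hx0 : (x : ℂ) ≠ 0 := by exact_mod_cast hx.1.ne'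
  rw [← mul_assoc, ← Complex.cpow_natCast, ← Complex.cpow_add _ _ hx0, add_sub_assoc]

lemma besselCoeff_mul_cpow_neg {a : ℝ} (ha : 0 < a) (ν α m : ℂ) (j : ℕ) (U D : ℂ) :
    besselCoeff ν α j * ((a : ℂ) ^ (-(2 * j + m + ν)) * U / D) =
      (a : ℂ) ^ (-m) * ((-1) ^ j * (α / (2 * a)) ^ (2 * (j : ℂ) + ν) * U /
        ((Nat.factorial j : ℂ) * Complex.Gamma (1 + j + ν) * D)) := by
  have ha0 : (a : ℂ) ≠ 0 := by exact_mod_cast ha.ne'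
  have hpow0 : (a : ℂ) ^ (2 * (j : ℂ) + ν) ≠ 0 := by simp [Complex.cpow_eq_zero_iff, ha0]
  have hsplit :
      (a : ℂ) ^ (-(2 * j + m + ν)) = (a : ℂ) ^ (-m) * ((a : ℂ) ^ (2 * (j : ℂ) + ν))⁻¹ := by
    rw [← Complex.cpow_neg, ← Complex.cpow_add _ _ ha0]; ring_nf
  have hα : (α / 2) ^ (2 * (j : ℂ) + ν) =
      (a : ℂ) ^ (2 * (j : ℂ) + ν) * (α / (2 * a)) ^ (2 * (j : ℂ) + ν) := by
    rw [← ofReal_mul_cpow ha.le]; congr 1; field_simp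
  rw [besselCoeff, hsplit, hα, show 1 + (j : ℂ) + ν = j + ν + 1 by ring]
  field_simp

theorem stmt18 (a b : ℝ) (hb : 0 < b) (ha : 0 < a) (hab : a * b < 1)
    (α : ℂ) (hα : α ∈ Complex.slitPlane) (k m v : ℂ) (hmv : 0 < (m + v).re) :
    (∫ x in (0:ℝ)..b, (x:ℂ) ^ (m - 1) * besselJ v ((x:ℂ) * α)
        * (-(Complex.log ((a:ℂ) * (x:ℂ)))) ^ k)
    = (a:ℂ) ^ (-m) * ∑' j : ℕ,
        (-1:ℂ) ^ j * (α / (2 * (a:ℂ))) ^ (2 * (j:ℂ) + v)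
          * uGamma (1 + k) (-((2 * (j:ℂ) + m + v) * Complex.log ((a:ℂ) * (b:ℂ))))
          / ((Nat.factorial j : ℂ) * Complex.Gamma (1 + (j:ℂ) + v)
              * (2 * (j:ℂ) + m + v) ^ (k + 1)) := by
  have hα0 : α ≠ 0 := Complex.slitPlane_ne_zero hα
  have hbound : ∀ j : ℕ, ∀ᵐ x ∂(volume.restrict (Ioc 0 b)),
      ‖((x : ℝ) : ℂ) ^ (2 * j)‖ ≤ (b ^ 2) ^ j := fun j =>
    (ae_restrict_iff' measurableSet_Ioc).mpr (.of_forall fun x (hx : 0 < x ∧ x ≤ b) => by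
      rw [norm_pow, Complex.norm_real, Real.norm_of_nonneg hx.1.le, pow_mul]
      exact pow_le_pow_left₀ (by positivity) (pow_le_pow_left₀ hx.1.le hx.2 2) _)
  rw [intervalIntegral.integral_of_le hb.le, setIntegral_congr_fun measurableSet_Ioc
    fun x (hx : 0 < x ∧ x ≤ b) => cpow_mul_besselJ_ofReal_mul hx.1 m v α _,
    integral_tsum_mul_of_norm_le (integrableOn_Ioc_cpow_mul_neg_log_cpow ha hb hab k hmv)
      (fun j => by fun_prop) hbound (summable_norm_besselCoeff_mul_pow hα0 (sq_nonneg b)),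
    ← tsum_mul_left]
  refine tsum_congr fun j => ?_
  rw [integral_Ioc_pow_mul_cpow_mul_neg_log_cpow ha hb hab k hmv,
    show ((2 * j : ℕ) : ℂ) + (m + v) = 2 * j + m + v by push_cast; ring,
    besselCoeff_mul_cpow_neg ha]
end
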